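/- arXiv:1005.2781 — 5 statements merged into one kernel-verified Lean document; each statement's English description precedes it below -/
import Mathlib

section
/- Let X_1, X_2, ... be an i.i.d. sequence of real-valued random variables with common distribution function F, and let F_n denote the empirical distribution function of the first n observations. Fix p ∈ (0,1). If the left quantile and right quantile of F at p coincide, i.e. lq_F(p) = rq_F(p), then the left sample quantile converges almost surely: lq_{F_n}(p) → lq_F(p) almost surely as n → ∞. -/
open MeasureTheory ProbabilityTheory Filter

/-- Left quantile of a distribution function `F` at level `p`:
`lq F p = inf {x | F x ≥ p}`. -/
noncomputable def lq (F : ℝ → ℝ) (p : ℝ) : ℝ := sInf {x : ℝ | p ≤ F x}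

/-- Right quantile of a distribution function `F` at level `p`:
`rq F p = inf {x | F x > p}`. -/
noncomputable def rq (F : ℝ → ℝ) (p : ℝ) : ℝ := sInf {x : ℝ | p < F x}

/-- Empirical distribution function of the first `n` observations `X 0, ..., X (n-1)`:
`edf X n ω x = (1/n) * #{i < n | X i ω ≤ x}`. -/
noncomputable def edf {Ω : Type*} (X : ℕ → Ω → ℝ) (n : ℕ) (ω : Ω) (x : ℝ) : ℝ :=
  ((Finset.range n).filter (fun i => X i ω ≤ x)).card / n

/-!
By the strong law of large numbers applied to the indicators `1{Xᵢ ≤ x}`, almost surely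
`F_n x → F x` simultaneously at all rational `x`. When `lq F p = rq F p =: q`, we have
`F a < p` for `a < q` and `p < F b` for `b > q`, so eventually `F_n a < p < F_n b`, which traps
the left sample quantile in `[a, b]`.
-/

lemma lq_mem_Icc {G : ℝ → ℝ} (hG : Monotone G) {a b p : ℝ} (ha : G a < p) (hb : p ≤ G b) :
    lq G p ∈ Set.Icc a b := by
  have hlower : a ∈ lowerBounds {x | p ≤ G x} := fun x hx =>
    le_of_not_gt fun hxa => (hx.trans (hG hxa.le)).not_gt ha
  exact ⟨le_csInf ⟨b, hb⟩ hlower, csInf_le ⟨a, hlower⟩ hb⟩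

lemma lt_of_lt_lq {F : ℝ → ℝ} {p x : ℝ} (hbdd : BddBelow {x | p ≤ F x}) (hx : x < lq F p) :
    F x < p :=
  lt_of_not_ge fun h => hx.not_ge (csInf_le hbdd h)

lemma lt_of_rq_lt {F : ℝ → ℝ} (hF : Monotone F) {p x : ℝ} (hne : {x | p < F x}.Nonempty)
    (hx : rq F p < x) : p < F x := by
  obtain ⟨y, hy, hyx⟩ := exists_lt_of_csInf_lt hne hx
  exact hy.trans_le (hF hyx.le)

lemma bddBelow_setOf_le_of_tendsto_atBot {F : ℝ → ℝ} {c p : ℝ} (hF : Tendsto F atBot (nhds c))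
    (hp : c < p) : BddBelow {x | p ≤ F x} := by
  obtain ⟨a, ha⟩ := eventually_atBot.1 (hF.eventually_lt_const hp)
  exact ⟨a, fun x hx => le_of_not_gt fun hxa => (ha x hxa.le).not_ge hx⟩

lemma nonempty_setOf_lt_of_tendsto_atTop {F : ℝ → ℝ} {c p : ℝ} (hF : Tendsto F atTop (nhds c))
    (hp : p < c) : {x | p < F x}.Nonempty :=
  (hF.eventually_const_lt hp).exists

theorem tendsto_lq_of_eventually {ι : Type*} {l : Filter ι} {G : ι → ℝ → ℝ}
    (hG : ∀ n, Monotone (G n)) {p q : ℝ}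
    (hlow : ∀ a : ℚ, (a : ℝ) < q → ∀ᶠ n in l, G n a < p)
    (hhigh : ∀ b : ℚ, q < b → ∀ᶠ n in l, p ≤ G n b) :
    Tendsto (fun n => lq (G n) p) l (nhds q) := by
  rw [tendsto_order]
  constructor
  · intro a ha
    obtain ⟨r, har, hrq⟩ := exists_rat_btwn ha
    obtain ⟨b, hb⟩ := exists_rat_gt q
    filter_upwards [hlow r hrq, hhigh b hb] with n hr hb
    exact har.trans_le (lq_mem_Icc (hG n) hr hb).1
  · intro b hb
    obtain ⟨r, hqr, hrb⟩ := exists_rat_btwn hb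
    obtain ⟨a, ha⟩ := exists_rat_lt q
    filter_upwards [hlow a ha, hhigh r hqr] with n ha hr
    exact (lq_mem_Icc (hG n) ha hr).2.trans_lt hrb

section EmpiricalDistribution

variable {Ω : Type*}

lemma edf_mono (X : ℕ → Ω → ℝ) (n : ℕ) (ω : Ω) : Monotone (edf X n ω) := fun _ _ hxy =>
  div_le_div_of_nonneg_right
    (Nat.cast_le.2 <| Finset.card_le_card <|
      Finset.monotone_filter_right _ fun _ _ hi => hi.trans hxy)
    n.cast_nonneg

lemma edf_eq_sum_indicator (X : ℕ → Ω → ℝ) (n : ℕ) (ω : Ω) (x : ℝ) :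
    edf X n ω x = (∑ i ∈ Finset.range n, (Set.Iic x).indicator 1 (X i ω)) / n := by
  simp only [edf, Finset.natCast_card_filter, Set.indicator_apply, Set.mem_Iic, Pi.one_apply]

variable [MeasurableSpace Ω]

lemma cdf_map_apply (μ : Measure Ω) [IsProbabilityMeasure μ] {Y : Ω → ℝ} (hY : Measurable Y)
    (x : ℝ) : cdf (μ.map Y) x = (μ {ω | Y ω ≤ x}).toReal := by
  have := Measure.isProbabilityMeasure_map (μ := μ) hY.aemeasurable
  rw [cdf_eq_real, measureReal_def, Measure.map_apply hY measurableSet_Iic]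
  rfl

theorem ae_tendsto_edf (μ : Measure Ω) [IsFiniteMeasure μ] (X : ℕ → Ω → ℝ)
    (hX₀ : Measurable (X 0)) (hindep : Pairwise fun i j => IndepFun (X i) (X j) μ)
    (hident : ∀ i, IdentDistrib (X i) (X 0) μ μ) (x : ℝ) :
    ∀ᵐ ω ∂μ, Tendsto (fun n => edf X n ω x) atTop (nhds (μ {ω | X 0 ω ≤ x}).toReal) := by
  have hmeas : Measurable ((Set.Iic x).indicator (1 : ℝ → ℝ)) :=
    measurable_one.indicator measurableSet_Iic
  let Y : ℕ → Ω → ℝ := fun i => (Set.Iic x).indicator 1 ∘ X i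
  have hY₀ : Y 0 = (X 0 ⁻¹' Set.Iic x).indicator 1 :=
    funext fun _ => (Set.indicator_comp_right _).symm
  have hint : Integrable (Y 0) μ := by
    rw [hY₀]
    exact (integrable_const 1).indicator (hX₀ measurableSet_Iic)
  have hmean : μ[Y 0] = (μ {ω | X 0 ω ≤ x}).toReal := by
    rw [hY₀, integral_indicator_one (hX₀ measurableSet_Iic), measureReal_def]
    rfl
  have hslln := strong_law_ae_real Y hint (fun i j hij => (hindep hij).comp hmeas hmeas)
    fun i => (hident i).comp hmeas
  rw [hmean] at hslln
  filter_upwards [hslln] with ω hω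
  simp only [edf_eq_sum_indicator]
  exact hω

end EmpiricalDistribution

/-- If the left and right quantiles of `F` at `p` coincide, then the left sample
quantile converges almost surely to `lq F p`. -/
theorem left_sample_quantile_tendsto
    {Ω : Type*} [MeasurableSpace Ω] (μ : Measure Ω) [IsProbabilityMeasure μ]
    (X : ℕ → Ω → ℝ) (hmeas : ∀ i, Measurable (X i))
    (hindep : iIndepFun (m := fun _ => Real.measurableSpace) X μ)
    (hident : ∀ i, IdentDistrib (X i) (X 0) μ μ)
    (F : ℝ → ℝ) (hF : ∀ x, F x = (μ {ω | X 0 ω ≤ x}).toReal)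
    (p : ℝ) (hp : p ∈ Set.Ioo (0 : ℝ) 1)
    (heq : lq F p = rq F p) :
    ∀ᵐ ω ∂μ, Tendsto (fun n => lq (edf X n ω) p) atTop (nhds (lq F p)) := by
  let ν := μ.map (X 0)
  have : IsProbabilityMeasure ν := Measure.isProbabilityMeasure_map (hmeas 0).aemeasurable
  have hFν : F = cdf ν := funext fun x => (hF x).trans (cdf_map_apply μ (hmeas 0) x).symm
  have hbdd := bddBelow_setOf_le_of_tendsto_atBot (hFν ▸ tendsto_cdf_atBot ν) hp.1
  have hne := nonempty_setOf_lt_of_tendsto_atTop (hFν ▸ tendsto_cdf_atTop ν) hp.2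
  have hconv : ∀ᵐ ω ∂μ, ∀ r : ℚ, Tendsto (fun n => edf X n ω r) atTop (nhds (F r)) := by
    rw [ae_all_iff]
    intro r
    simpa only [hF] using
      ae_tendsto_edf μ X (hmeas 0) (fun i j hij => hindep.indepFun hij) hident r
  filter_upwards [hconv] with ω hω
  refine tendsto_lq_of_eventually (edf_mono X · ω) (fun a ha => ?_) fun b hb => ?_
  · exact (hω a).eventually_lt_const (lt_of_lt_lq hbdd ha)
  · rw [heq] at hb
    exact ((hω b).eventually_const_lt (lt_of_rq_lt (hFν ▸ (cdf ν).mono) hne hb)).mono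
      fun _ => le_of_lt
end

section
/- Let X_1, X_2, ... be an i.i.d. sequence of real-valued random variables with common distribution function F, and let F_n denote the empirical distribution function of the first n observations. Fix p ∈ (0,1). If lq_F(p) < rq_F(p), then with probability 1 the sequence of right sample quantiles (rq_{F_n}(p))_{n≥1} does not converge (it diverges almost surely). -/
open MeasureTheory ProbabilityTheory Filter

/-!
On the interval `(lq F p, rq F p)` the distribution function is constantly `p`, so for `x` there
the counts `#{i < n | X i ≤ x} - n p` form a random walk with centred steps `1 - p` and `-p`.
Such a walk is a martingale with bounded increments that cannot converge, hence it is unbounded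
above and below. Taking `x₁ < x₂` in the interval, infinitely often `F_n x₁ > p`, forcing the
right sample quantile below `x₁`, and infinitely often `F_n x₂ < p`, forcing it above `x₂`.
-/

open Finset
open scoped NNReal Topology

section Quantile

variable {F : ℝ → ℝ} {p x : ℝ}

lemma rq_le_of_lt_apply (hbdd : BddBelow {y | p < F y}) (hx : p < F x) : rq F p ≤ x :=
  csInf_le hbdd hx

lemma le_rq_of_apply_le (hF : Monotone F) (hne : ∃ y, p < F y) (hx : F x ≤ p) : x ≤ rq F p :=
  le_csInf hne fun _ hy => le_of_not_gt fun hyx => (hy.trans_le (hF hyx.le)).not_ge hx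

lemma apply_eq_of_lq_lt_of_lt_rq (hF : Monotone F) (h₁ : lq F p < x) (h₂ : x < rq F p) :
    F x = p := by
  have hne : lq F p ≠ rq F p := (h₁.trans h₂).ne
  refine le_antisymm (not_lt.1 fun hx => ?_) (not_lt.1 fun hx => ?_)
  · by_cases hbdd : BddBelow {y | p < F y}
    · exact h₂.not_ge (csInf_le hbdd hx)
    · have hall : ∀ y, p < F y := fun y => by
        obtain ⟨z, hz, hzy⟩ := not_bddBelow_iff.1 hbdd y
        exact hz.trans_le (hF hzy.le)
      apply hne
      simp only [lq, rq, fun y => (hall y).le, hall, Set.ofPred_true]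
  · by_cases hS : {y | p ≤ F y}.Nonempty
    · refine h₁.not_ge (le_csInf hS fun y hy => le_of_not_gt fun hyx => ?_)
      exact (hx.trans_le hy).not_ge (hF hyx.le)
    · have hT : {y | p < F y} = ∅ :=
        Set.eq_empty_of_forall_notMem fun y (hy : p < F y) => hS ⟨y, hy.le⟩
      apply hne
      rw [lq, rq, Set.not_nonempty_iff_eq_empty.1 hS, hT]

end Quantile

section EmpiricalDistribution

variable {Ω : Type*} (X : ℕ → Ω → ℝ) (n : ℕ) (ω : Ω)

lemma monotone_edf : Monotone (edf X n ω) := fun _ _ hxy => by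
  unfold edf
  gcongr

lemma edf_eq_zero_of_forall_lt {y : ℝ} (h : ∀ i < n, y < X i ω) : edf X n ω y = 0 := by
  rw [edf, filter_false_of_mem fun i hi => not_le.2 (h i (mem_range.1 hi))]
  simp

lemma edf_eq_one_of_forall_le (hn : n ≠ 0) {y : ℝ} (h : ∀ i < n, X i ω ≤ y) :
    edf X n ω y = 1 := by
  rw [edf, filter_true_of_mem fun i hi => h i (mem_range.1 hi), card_range]
  exact div_self (Nat.cast_ne_zero.2 hn)

lemma bddBelow_setOf_lt_edf {p : ℝ} (hp : 0 ≤ p) : BddBelow {y | p < edf X n ω y} := by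
  obtain ⟨c, hc⟩ := ((range n).image (X · ω)).bddBelow
  refine ⟨c, fun y (hy : p < edf X n ω y) => le_of_not_gt fun hyc => hy.not_ge ?_⟩
  rwa [edf_eq_zero_of_forall_lt X n ω fun i hi =>
    hyc.trans_le (hc (mem_image_of_mem _ (mem_range.2 hi)))]

lemma exists_lt_edf {p : ℝ} (hp : p < 1) (hn : n ≠ 0) : ∃ y, p < edf X n ω y := by
  obtain ⟨c, hc⟩ := ((range n).image (X · ω)).bddAbove
  exact ⟨c, by rwa [edf_eq_one_of_forall_le X n ω hn fun i hi =>
    hc (mem_image_of_mem _ (mem_range.2 hi))]⟩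

lemma natCast_mul_edf_sub (x p : ℝ) :
    n * (edf X n ω x - p) = ∑ i ∈ range n, ((Set.Iic x).indicator 1 (X i ω) - p) := by
  rcases eq_or_ne n 0 with rfl | hn
  · simp
  rw [sum_sub_distrib, sum_const, card_range, nsmul_eq_mul, mul_sub, edf,
    mul_div_cancel₀ _ (Nat.cast_ne_zero.2 hn), natCast_card_filter]
  simp [Set.indicator_apply]

end EmpiricalDistribution

lemma frequently_lt_of_not_bddAbove {α : Type*} [LinearOrder α] {u : ℕ → α}
    (hu : ¬BddAbove (Set.range u)) (c : α) : ∃ᶠ n in atTop, c < u n := by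
  by_contra hc
  simp only [not_frequently, not_lt] at hc
  exact hu (isBoundedUnder_of_eventually_le hc).bddAbove_range

lemma frequently_lt_of_not_bddBelow {α : Type*} [LinearOrder α] {u : ℕ → α}
    (hu : ¬BddBelow (Set.range u)) (c : α) : ∃ᶠ n in atTop, u n < c :=
  frequently_lt_of_not_bddAbove (α := αᵒᵈ) hu c

lemma not_tendsto_of_le_abs_sub_succ {u : ℕ → ℝ} {δ : ℝ} (hδ : 0 < δ)
    (hu : ∀ n, δ ≤ |u (n + 1) - u n|) (c : ℝ) : ¬Tendsto u atTop (𝓝 c) := fun hc => by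
  have hdiff : Tendsto (fun n => |u (n + 1) - u n|) atTop (𝓝 0) := by
    simpa using ((hc.comp (tendsto_add_atTop_nat 1)).sub hc).abs
  obtain ⟨n, hn⟩ := (hdiff.eventually_lt_const hδ).exists
  exact (hu n).not_gt hn

section RandomWalk

variable {Ω : Type*} {m0 : MeasurableSpace Ω} {μ : Measure Ω}

/-- With bounded increments, boundedness from above is equivalent to convergence; increments
bounded away from `0` rule out convergence. -/
theorem MeasureTheory.Martingale.ae_not_bddAbove_and_not_bddBelow [IsFiniteMeasure μ]
    {M : ℕ → Ω → ℝ} {ℱ : Filtration ℕ m0} (hM : Martingale M ℱ μ) {R : ℝ≥0} {δ : ℝ} (hδ : 0 < δ)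
    (hR : ∀ᵐ ω ∂μ, ∀ n, |M (n + 1) ω - M n ω| ≤ R)
    (hMδ : ∀ᵐ ω ∂μ, ∀ n, δ ≤ |M (n + 1) ω - M n ω|) :
    ∀ᵐ ω ∂μ, ¬BddAbove (Set.range fun n => M n ω) ∧ ¬BddBelow (Set.range fun n => M n ω) := by
  have hR' : ∀ᵐ ω ∂μ, ∀ n, |(-M) (n + 1) ω - (-M) n ω| ≤ R := by
    filter_upwards [hR] with ω hω n
    rw [Pi.neg_apply, Pi.neg_apply, Pi.neg_apply, Pi.neg_apply, neg_sub_neg, abs_sub_comm]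
    exact hω n
  filter_upwards [hM.submartingale.bddAbove_iff_exists_tendsto hR,
    hM.neg.submartingale.bddAbove_iff_exists_tendsto hR', hMδ] with ω hup hdown hω
  have hnc := not_tendsto_of_le_abs_sub_succ (u := fun n => M n ω) hδ hω
  refine ⟨fun hb => ?_, fun ⟨b, hb⟩ => ?_⟩
  · obtain ⟨c, hc⟩ := hup.1 hb
    exact hnc c hc
  · obtain ⟨c, hc⟩ := hdown.1 ⟨-b, by
      rintro _ ⟨n, rfl⟩
      exact neg_le_neg (hb ⟨n, rfl⟩)⟩
    exact hnc (-c) (by simpa using hc.neg)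

/-- The sum runs up to `ξ n` inclusive so that it is adapted to the natural filtration of `ξ`. -/
theorem ProbabilityTheory.iIndepFun.martingale_sum_range_succ {ξ : ℕ → Ω → ℝ}
    (hsm : ∀ i, StronglyMeasurable (ξ i)) (hindep : iIndepFun ξ μ)
    (hint : ∀ i, Integrable (ξ i) μ) (hmean : ∀ i, μ[ξ i] = 0) :
    Martingale (fun n ω => ∑ i ∈ range (n + 1), ξ i ω) (Filtration.natural ξ hsm) μ := by
  have := hindep.isProbabilityMeasure
  refine martingale_of_condExp_sub_eq_zero_nat (fun n => ?_)
    (fun n => integrable_finsetSum _ fun i _ => hint i) fun n => ?_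
  · refine stronglyMeasurable_fun_sum _ fun i hi => ?_
    exact (Filtration.stronglyAdapted_natural hsm i).mono
      ((Filtration.natural ξ hsm).mono (Nat.lt_succ_iff.1 (mem_range.1 hi)))
  · have hincr : (fun ω => ∑ i ∈ range (n + 1 + 1), ξ i ω) -
        (fun ω => ∑ i ∈ range (n + 1), ξ i ω) = ξ (n + 1) := by
      ext ω
      simp [sum_range_succ _ (n + 1)]
    rw [hincr]
    exact (hindep.condExp_natural_ae_eq_of_lt hsm n.lt_succ_self).trans (by rw [hmean]; rfl)

theorem ProbabilityTheory.iIndepFun.ae_not_bddAbove_and_not_bddBelow_sum_range {ξ : ℕ → Ω → ℝ}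
    (hmeas : ∀ i, Measurable (ξ i)) (hindep : iIndepFun ξ μ) (hmean : ∀ i, μ[ξ i] = 0)
    {C : ℝ≥0} (hC : ∀ i ω, |ξ i ω| ≤ C) {δ : ℝ} (hδ : 0 < δ) (hξδ : ∀ i ω, δ ≤ |ξ i ω|) :
    ∀ᵐ ω ∂μ, ¬BddAbove (Set.range fun n => ∑ i ∈ range n, ξ i ω) ∧
      ¬BddBelow (Set.range fun n => ∑ i ∈ range n, ξ i ω) := by
  have := hindep.isProbabilityMeasure
  have hint : ∀ i, Integrable (ξ i) μ := fun i =>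
    .of_bound (hmeas i).aestronglyMeasurable C (.of_forall fun ω => hC i ω)
  have hM := hindep.martingale_sum_range_succ (fun i => (hmeas i).stronglyMeasurable) hint hmean
  have hincr : ∀ n ω, ∑ i ∈ range (n + 1 + 1), ξ i ω - ∑ i ∈ range (n + 1), ξ i ω = ξ (n + 1) ω :=
    fun n ω => by rw [sum_range_succ _ (n + 1), add_sub_cancel_left]
  filter_upwards [hM.ae_not_bddAbove_and_not_bddBelow hδ
    (.of_forall fun ω n => (hincr n ω).symm ▸ hC _ ω)
    (.of_forall fun ω n => (hincr n ω).symm ▸ hξδ _ ω)] with ω ⟨hup, hdown⟩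
  have hsub := Set.range_comp_subset_range (· + 1) fun n => ∑ i ∈ range n, ξ i ω
  exact ⟨fun hb => hup (hb.mono hsub), fun hb => hdown (hb.mono hsub)⟩

theorem ae_frequently_lt_edf_and_frequently_edf_lt [IsProbabilityMeasure μ] {X : ℕ → Ω → ℝ}
    (hmeas : ∀ i, Measurable (X i)) (hindep : iIndepFun X μ) {x p : ℝ} (hp : p ∈ Set.Ioo 0 1)
    (hx : ∀ i, (μ {ω | X i ω ≤ x}).toReal = p) :
    ∀ᵐ ω ∂μ, (∃ᶠ n in atTop, p < edf X n ω x) ∧ ∃ᶠ n in atTop, edf X n ω x < p := by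
  set φ : ℝ → ℝ := fun y => (Set.Iic x).indicator 1 y - p
  have hφmeas : Measurable φ := (measurable_one.indicator measurableSet_Iic).sub_const p
  have hφbound : ∀ y, min p (1 - p) ≤ |φ y| ∧ |φ y| ≤ ((1 : ℝ≥0) : ℝ) := fun y => by
    obtain ⟨hp₀, hp₁⟩ := hp
    rw [NNReal.coe_one]
    by_cases hy : y ≤ x
    · rw [show φ y = 1 - p by simp [φ, hy], abs_of_pos (sub_pos.2 hp₁)]
      exact ⟨min_le_right _ _, by linarith⟩
    · rw [show φ y = -p by simp [φ, hy], abs_neg, abs_of_pos hp₀]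
      exact ⟨min_le_left _ _, by linarith⟩
  have hmean : ∀ i, μ[φ ∘ X i] = 0 := fun i => by
    have hset : MeasurableSet (X i ⁻¹' Set.Iic x) := hmeas i measurableSet_Iic
    have hint : Integrable ((X i ⁻¹' Set.Iic x).indicator (1 : Ω → ℝ)) μ :=
      (integrable_const 1).indicator hset
    change ∫ ω, (X i ⁻¹' Set.Iic x).indicator 1 ω - p ∂μ = 0
    rw [integral_sub hint (integrable_const p), integral_indicator_one hset, integral_const,
      probReal_univ, one_smul, measureReal_def]
    exact sub_eq_zero.2 (hx i)
  have hindep' : iIndepFun (fun i => φ ∘ X i) μ := hindep.comp (fun _ => φ) fun _ => hφmeas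
  filter_upwards [hindep'.ae_not_bddAbove_and_not_bddBelow_sum_range
    (fun i => hφmeas.comp (hmeas i)) hmean (fun _ _ => (hφbound _).2)
    (lt_min hp.1 (sub_pos.2 hp.2)) (fun _ _ => (hφbound _).1)] with ω ⟨hup, hdown⟩
  refine ⟨(frequently_lt_of_not_bddAbove hup 0).mono fun n hn => ?_,
    (frequently_lt_of_not_bddBelow hdown 0).mono fun n hn => ?_⟩
  · have hn' := hn.trans_eq (natCast_mul_edf_sub X n ω x p).symm
    exact sub_pos.1 (pos_of_mul_pos_right hn' n.cast_nonneg)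
  · have hn' := (natCast_mul_edf_sub X n ω x p).trans_lt hn
    exact sub_neg.1 (neg_of_mul_neg_right hn' n.cast_nonneg)

end RandomWalk

/-- If `lq F p < rq F p`, then almost surely the sequence of right sample
quantiles does not converge. -/
theorem right_sample_quantile_diverges
    {Ω : Type*} [MeasurableSpace Ω] (μ : Measure Ω) [IsProbabilityMeasure μ]
    (X : ℕ → Ω → ℝ) (hmeas : ∀ i, Measurable (X i))
    (hindep : iIndepFun (m := fun _ => Real.measurableSpace) X μ)
    (hident : ∀ i, IdentDistrib (X i) (X 0) μ μ)
    (F : ℝ → ℝ) (hF : ∀ x, F x = (μ {ω | X 0 ω ≤ x}).toReal)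
    (p : ℝ) (hp : p ∈ Set.Ioo (0 : ℝ) 1)
    (hlt : lq F p < rq F p) :
    ∀ᵐ ω ∂μ, ¬ ∃ L : ℝ, Tendsto (fun n => rq (edf X n ω) p) atTop (nhds L) := by
  have hFmono : Monotone F := fun u v huv => by
    rw [hF, hF]
    exact ENNReal.toReal_mono (measure_ne_top μ _) (measure_mono fun ω h => le_trans h huv)
  have hlevel : ∀ x, lq F p < x → x < rq F p → ∀ i, (μ {ω | X i ω ≤ x}).toReal = p :=
    fun x h₁ h₂ i => by
      rw [← apply_eq_of_lq_lt_of_lt_rq hFmono h₁ h₂, hF]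
      exact congrArg ENNReal.toReal ((hident i).measure_mem_eq measurableSet_Iic)
  obtain ⟨x₁, hlq, hx₁⟩ := exists_between hlt
  obtain ⟨x₂, hx₁₂, hrq⟩ := exists_between hx₁
  filter_upwards [ae_frequently_lt_edf_and_frequently_edf_lt hmeas hindep hp (hlevel x₁ hlq hx₁),
    ae_frequently_lt_edf_and_frequently_edf_lt hmeas hindep hp
      (hlevel x₂ (hlq.trans hx₁₂) hrq)] with ω ⟨hbelow, _⟩ ⟨_, habove⟩ ⟨L, hL⟩
  have hL₁ : L ≤ x₁ := le_of_tendsto_of_frequently hL <| hbelow.mono fun n hn =>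
    rq_le_of_lt_apply (bddBelow_setOf_lt_edf X n ω hp.1.le) hn
  have hL₂ : x₂ ≤ L := ge_of_tendsto_of_frequently hL <|
    (habove.and_eventually (eventually_ne_atTop 0)).mono fun n hn =>
      le_rq_of_apply_le (monotone_edf X n ω) (exists_lt_edf X n ω hp.2 hn.2) hn.1.le
  linarith
end

section
/- Let X_1, X_2, ... be i.i.d. random variables with P(X_i = −1) = P(X_i = 1) = 1/2, and let F_n denote the empirical distribution function of the first n observations. Then with probability 1, both the sequence of left sample quantiles (lq_{F_n}(1/2))_{n≥1} and the sequence of right sample quantiles (rq_{F_n}(1/2))_{n≥1} fail to converge (they diverge almost surely). -/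
open MeasureTheory ProbabilityTheory Filter

/-!
The partial sums `Sₙ = X₀ + ⋯ + Xₙ₋₁` form a martingale whose increments have absolute value `1`,
so `Sₙ` cannot converge. By the one-sided martingale bound, a martingale with bounded increments
that is bounded above (or below) converges; hence almost surely `Sₙ` is unbounded in both
directions, and `Sₙ > 0` as well as `Sₙ < 0` for infinitely many `n`. Since
`2n·Fₙ(x) = n - Sₙ` for `-1 ≤ x < 1`, both sample medians are `1` when `Sₙ > 0` and `-1` when
`Sₙ < 0`.
-/

open Finset
open scoped NNReal Topology

section Sequences

lemma pos_of_sum_range_ne_zero {M : Type*} [AddCommMonoid M] {f : ℕ → M} {n : ℕ}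
    (h : ∑ i ∈ range n, f i ≠ 0) : 0 < n :=
  Nat.pos_of_ne_zero fun hn => h (by simp [hn])

lemma not_exists_tendsto_of_le_abs_sub {u : ℕ → ℝ} {δ : ℝ} (hδ : 0 < δ)
    (hu : ∀ n, δ ≤ |u (n + 1) - u n|) : ¬ ∃ c, Tendsto u atTop (𝓝 c) := by
  rintro ⟨c, hc⟩
  have hstep : Tendsto (fun n => |u (n + 1) - u n|) atTop (𝓝 0) := by
    simpa using ((hc.comp (tendsto_add_atTop_nat 1)).sub hc).abs
  exact hδ.not_ge (ge_of_tendsto' hstep hu)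

lemma frequently_lt_of_not_bddAbove_range {β : Type*} [LinearOrder β] {u : ℕ → β}
    (hu : ¬ BddAbove (Set.range u)) (b : β) : ∃ᶠ n in atTop, b < u n := by
  by_contra! h
  exact hu (IsBoundedUnder.bddAbove_range ⟨b, h⟩)

lemma frequently_lt_of_not_bddBelow_range {β : Type*} [LinearOrder β] {u : ℕ → β}
    (hu : ¬ BddBelow (Set.range u)) (b : β) : ∃ᶠ n in atTop, u n < b := by
  by_contra! h
  exact hu (IsBoundedUnder.bddBelow_range ⟨b, h⟩)

lemma not_exists_tendsto_of_frequently_eq {α X : Type*} [TopologicalSpace X] [T1Space X]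
    {l : Filter α} {u : α → X} {a b : X} (hab : a ≠ b) (ha : ∃ᶠ n in l, u n = a)
    (hb : ∃ᶠ n in l, u n = b) : ¬ ∃ c, Tendsto u l (𝓝 c) := by
  rintro ⟨c, hc⟩
  exact hab ((isClosed_singleton.mem_of_frequently_of_tendsto ha hc).symm.trans
    (isClosed_singleton.mem_of_frequently_of_tendsto hb hc))

end Sequences

namespace MeasureTheory

variable {Ω : Type*} {m0 : MeasurableSpace Ω} {μ : Measure Ω}

theorem Martingale.ae_not_bddAbove_and_not_bddBelow_s8 [IsFiniteMeasure μ]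
    {ℱ : Filtration ℕ m0} {f : ℕ → Ω → ℝ} (hf : Martingale f ℱ μ) {δ : ℝ} {R : ℝ≥0} (hδ : 0 < δ)
    (hstep : ∀ᵐ ω ∂μ, ∀ i, δ ≤ |f (i + 1) ω - f i ω| ∧ |f (i + 1) ω - f i ω| ≤ R) :
    ∀ᵐ ω ∂μ, ¬ BddAbove (Set.range fun n => f n ω) ∧ ¬ BddBelow (Set.range fun n => f n ω) := by
  have hbdd : ∀ᵐ ω ∂μ, ∀ i, |f (i + 1) ω - f i ω| ≤ R := hstep.mono fun ω h i => (h i).2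
  filter_upwards [hstep, hf.submartingale.bddAbove_iff_exists_tendsto hbdd,
    hf.bddAbove_range_iff_bddBelow_range hbdd] with ω hω hconv hsymm
  have hdiv := not_exists_tendsto_of_le_abs_sub (u := fun n => f n ω) hδ fun i => (hω i).1
  exact ⟨fun h => hdiv (hconv.mp h), fun h => hdiv (hconv.mp (hsymm.mpr h))⟩

end MeasureTheory

namespace ProbabilityTheory

variable {Ω : Type*} {m0 : MeasurableSpace Ω} {μ : Measure Ω} [IsProbabilityMeasure μ]

theorem iIndepFun.martingale_sum_range_succ_s8 {E : Type*} [NormedAddCommGroup E] [NormedSpace ℝ E]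
    [CompleteSpace E] [MeasurableSpace E] [BorelSpace E] [SecondCountableTopology E]
    {X : ℕ → Ω → E} (hX : ∀ i, StronglyMeasurable (X i))
    (hindep : iIndepFun X μ) (hint : ∀ i, Integrable (X i) μ) (hmean : ∀ i, μ[X i] = 0) :
    Martingale (fun n => ∑ k ∈ range (n + 1), X k) (Filtration.natural X hX) μ := by
  refine martingale_of_condExp_sub_eq_zero_nat (fun n => ?_)
    (fun n => integrable_finsetSum' _ fun k _ => hint k) (fun n => ?_)
  · exact stronglyMeasurable_sum _ fun k hk =>
      (Filtration.stronglyAdapted_natural hX k).mono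
        (Filtration.mono _ (Nat.lt_succ_iff.mp (mem_range.mp hk)))
  · rw [sum_range_succ_sub_sum]
    filter_upwards [hindep.condExp_natural_ae_eq_of_lt hX n.lt_succ_self] with ω hω
    rw [hω, hmean]
    rfl

theorem iIndepFun.ae_not_bddAbove_and_not_bddBelow_sum_range_s8 {X : ℕ → Ω → ℝ}
    (hX : ∀ i, StronglyMeasurable (X i)) (hindep : iIndepFun X μ) (hmean : ∀ i, μ[X i] = 0)
    {δ : ℝ} {R : ℝ≥0} (hδ : 0 < δ) (hbdd : ∀ᵐ ω ∂μ, ∀ i, δ ≤ |X i ω| ∧ |X i ω| ≤ R) :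
    ∀ᵐ ω ∂μ, ¬ BddAbove (Set.range fun n => ∑ k ∈ range n, X k ω) ∧
      ¬ BddBelow (Set.range fun n => ∑ k ∈ range n, X k ω) := by
  have hint (i : ℕ) : Integrable (X i) μ :=
    .of_bound (hX i).aestronglyMeasurable R (hbdd.mono fun ω h => (h i).2)
  refine ((hindep.martingale_sum_range_succ_s8 hX hint hmean).ae_not_bddAbove_and_not_bddBelow_s8
    (R := R) hδ ?_).mono fun ω ⟨hAbove, hBelow⟩ => ?_
  · filter_upwards [hbdd] with ω hω i
    rw [← Pi.sub_apply, sum_range_succ_sub_sum]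
    exact hω (i + 1)
  simp only [Finset.sum_apply] at hAbove hBelow
  have hsub := Set.range_comp_subset_range (· + 1) fun n => ∑ k ∈ range n, X k ω
  exact ⟨fun h => hAbove (h.mono hsub), fun h => hBelow (h.mono hsub)⟩

end ProbabilityTheory

section FairCoin

variable {Ω : Type*} [MeasurableSpace Ω] {μ : Measure Ω} [IsProbabilityMeasure μ] {Y : Ω → ℝ}

lemma ae_eq_neg_one_or_eq_one_of_measure_eq_half (hY : Measurable Y)
    (hm1 : μ {ω | Y ω = -1} = 1 / 2) (h1 : μ {ω | Y ω = 1} = 1 / 2) :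
    ∀ᵐ ω ∂μ, Y ω = -1 ∨ Y ω = 1 := by
  have hdisj : Disjoint {ω | Y ω = -1} {ω | Y ω = 1} :=
    Set.disjoint_left.mpr fun ω (h : Y ω = -1) h' => by norm_num [h] at h'
  have hYm1 : MeasurableSet {ω | Y ω = -1} := hY (measurableSet_singleton (-1))
  have hY1 : MeasurableSet {ω | Y ω = 1} := hY (measurableSet_singleton 1)
  refine (mem_ae_iff_prob_eq_one (hYm1.union hY1)).mpr ?_
  rw [measure_union hdisj hY1, hm1, h1, ENNReal.add_halves]

lemma integral_eq_zero_of_measure_eq_half (hY : Measurable Y)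
    (hm1 : μ {ω | Y ω = -1} = 1 / 2) (h1 : μ {ω | Y ω = 1} = 1 / 2) : μ[Y] = 0 := by
  have hY1 : MeasurableSet {ω | Y ω = 1} := hY (measurableSet_singleton 1)
  have hY_eq : Y =ᵐ[μ] fun ω => 2 * {ω | Y ω = 1}.indicator 1 ω - 1 := by
    filter_upwards [ae_eq_neg_one_or_eq_one_of_measure_eq_half hY hm1 h1] with ω h
    rcases h with h | h <;> norm_num [Set.indicator, h]
  rw [integral_congr_ae hY_eq, integral_sub ((integrable_indicator_iff hY1).mpr
    (integrable_const 1).integrableOn |>.const_mul 2) (integrable_const 1), integral_const_mul,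
    integral_indicator_one hY1, measureReal_def, h1]
  simp

end FairCoin

section Quantile

variable {F : ℝ → ℝ} {p t : ℝ}

lemma lq_eq_of_le_of_forall_lt (ht : p ≤ F t) (hlt : ∀ x < t, F x < p) : lq F p = t :=
  IsLeast.csInf_eq ⟨ht, fun _ hx => not_lt.mp fun h => (hlt _ h).not_ge hx⟩

lemma rq_eq_of_lt_of_forall_le (ht : p < F t) (hle : ∀ x < t, F x ≤ p) : rq F p = t :=
  IsLeast.csInf_eq ⟨ht, fun _ hx => not_lt.mp fun h => (hle _ h).not_gt hx⟩

end Quantile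

section EmpiricalDistribution

variable {Ω : Type*} {X : ℕ → Ω → ℝ} {n : ℕ} {ω : Ω} {x : ℝ}

lemma edf_eq_zero_of_lt_neg_one (hv : ∀ i, X i ω = -1 ∨ X i ω = 1) (hx : x < -1) :
    edf X n ω x = 0 := by
  rw [edf, filter_false_of_mem fun i _ => ?_, card_empty, Nat.cast_zero, zero_div]
  rcases hv i with h | h <;> rw [h] <;> linarith

lemma edf_eq_one_of_one_le (hv : ∀ i, X i ω = -1 ∨ X i ω = 1) (hn : 0 < n) (hx : 1 ≤ x) :
    edf X n ω x = 1 := by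
  rw [edf, filter_true_of_mem fun i _ => ?_, card_range, div_self (by positivity)]
  rcases hv i with h | h <;> rw [h] <;> linarith

lemma two_mul_card_filter_le_eq_sub_sum (hv : ∀ i, X i ω = -1 ∨ X i ω = 1) (hx₁ : -1 ≤ x)
    (hx₂ : x < 1) :
    2 * (#{i ∈ range n | X i ω ≤ x} : ℝ) = n - ∑ i ∈ range n, X i ω := by
  have hXi : ∀ i, X i ω = 1 - 2 * if X i ω ≤ x then 1 else 0 := fun i => by
    rcases hv i with h | h
    · rw [h, if_pos hx₁]; norm_num
    · rw [h, if_neg hx₂.not_ge]; norm_num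
  rw [natCast_card_filter, mul_sum, sum_congr rfl fun i _ => hXi i, sum_sub_distrib]
  simp

lemma edf_eq_of_neg_one_le_of_lt_one (hv : ∀ i, X i ω = -1 ∨ X i ω = 1) (hx₁ : -1 ≤ x)
    (hx₂ : x < 1) :
    edf X n ω x = (n - ∑ i ∈ range n, X i ω) / (2 * n) := by
  rw [edf, ← two_mul_card_filter_le_eq_sub_sum hv hx₁ hx₂, mul_div_mul_left _ _ two_ne_zero]

lemma edf_lt_half_of_sum_pos (hv : ∀ i, X i ω = -1 ∨ X i ω = 1)
    (hS : 0 < ∑ i ∈ range n, X i ω) (hx : x < 1) : edf X n ω x < 1 / 2 := by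
  rcases lt_or_ge x (-1) with hx₁ | hx₁
  · rw [edf_eq_zero_of_lt_neg_one hv hx₁]
    norm_num
  · have hn : (0 : ℝ) < n := Nat.cast_pos.mpr (pos_of_sum_range_ne_zero hS.ne')
    rw [edf_eq_of_neg_one_le_of_lt_one hv hx₁ hx, div_lt_iff₀ (by positivity)]
    linarith

lemma half_lt_edf_neg_one_of_sum_neg (hv : ∀ i, X i ω = -1 ∨ X i ω = 1)
    (hS : ∑ i ∈ range n, X i ω < 0) : 1 / 2 < edf X n ω (-1) := by
  have hn : (0 : ℝ) < n := Nat.cast_pos.mpr (pos_of_sum_range_ne_zero hS.ne)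
  rw [edf_eq_of_neg_one_le_of_lt_one hv le_rfl (by norm_num), lt_div_iff₀ (by positivity)]
  linarith

lemma lq_edf_eq_one_of_sum_pos (hv : ∀ i, X i ω = -1 ∨ X i ω = 1)
    (hS : 0 < ∑ i ∈ range n, X i ω) : lq (edf X n ω) (1 / 2) = 1 := by
  refine lq_eq_of_le_of_forall_lt ?_ fun x hx => edf_lt_half_of_sum_pos hv hS hx
  rw [edf_eq_one_of_one_le hv (pos_of_sum_range_ne_zero hS.ne') le_rfl]
  norm_num

lemma rq_edf_eq_one_of_sum_pos (hv : ∀ i, X i ω = -1 ∨ X i ω = 1)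
    (hS : 0 < ∑ i ∈ range n, X i ω) : rq (edf X n ω) (1 / 2) = 1 := by
  refine rq_eq_of_lt_of_forall_le ?_ fun x hx => (edf_lt_half_of_sum_pos hv hS hx).le
  rw [edf_eq_one_of_one_le hv (pos_of_sum_range_ne_zero hS.ne') le_rfl]
  norm_num

lemma lq_edf_eq_neg_one_of_sum_neg (hv : ∀ i, X i ω = -1 ∨ X i ω = 1)
    (hS : ∑ i ∈ range n, X i ω < 0) : lq (edf X n ω) (1 / 2) = -1 :=
  lq_eq_of_le_of_forall_lt (half_lt_edf_neg_one_of_sum_neg hv hS).le fun x hx => by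
    rw [edf_eq_zero_of_lt_neg_one hv hx]
    norm_num

lemma rq_edf_eq_neg_one_of_sum_neg (hv : ∀ i, X i ω = -1 ∨ X i ω = 1)
    (hS : ∑ i ∈ range n, X i ω < 0) : rq (edf X n ω) (1 / 2) = -1 :=
  rq_eq_of_lt_of_forall_le (half_lt_edf_neg_one_of_sum_neg hv hS) fun x hx => by
    rw [edf_eq_zero_of_lt_neg_one hv hx]
    norm_num

end EmpiricalDistribution

/-- For an i.i.d. fair-coin sequence taking values `-1` and `1` each with
probability `1/2`, both the left and right sample median sequences fail to
converge almost surely. -/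
theorem fair_coin_sample_medians_diverge
    {Ω : Type*} [MeasurableSpace Ω] (μ : Measure Ω) [IsProbabilityMeasure μ]
    (X : ℕ → Ω → ℝ) (hmeas : ∀ i, Measurable (X i))
    (hindep : iIndepFun (m := fun _ => Real.measurableSpace) X μ)
    (hident : ∀ i, IdentDistrib (X i) (X 0) μ μ)
    (hm1 : μ {ω | X 0 ω = -1} = 1/2) (h1 : μ {ω | X 0 ω = 1} = 1/2) :
    ∀ᵐ ω ∂μ,
      (¬ ∃ L : ℝ, Tendsto (fun n => lq (edf X n ω) (1/2)) atTop (nhds L)) ∧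
      (¬ ∃ L : ℝ, Tendsto (fun n => rq (edf X n ω) (1/2)) atTop (nhds L)) := by
  have hm1' (i : ℕ) : μ {ω | X i ω = -1} = 1 / 2 :=
    ((hident i).measure_mem_eq (measurableSet_singleton _)).trans hm1
  have h1' (i : ℕ) : μ {ω | X i ω = 1} = 1 / 2 :=
    ((hident i).measure_mem_eq (measurableSet_singleton _)).trans h1
  have hsign : ∀ᵐ ω ∂μ, ∀ i, X i ω = -1 ∨ X i ω = 1 := ae_all_iff.mpr fun i =>
    ae_eq_neg_one_or_eq_one_of_measure_eq_half (hmeas i) (hm1' i) (h1' i)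
  have hmean (i : ℕ) : μ[X i] = 0 :=
    integral_eq_zero_of_measure_eq_half (hmeas i) (hm1' i) (h1' i)
  have hbdd : ∀ᵐ ω ∂μ, ∀ i, 1 ≤ |X i ω| ∧ |X i ω| ≤ (1 : ℝ≥0) :=
    hsign.mono fun ω hv i => by rcases hv i with h | h <;> simp [h]
  filter_upwards [hsign, hindep.ae_not_bddAbove_and_not_bddBelow_sum_range_s8
    (fun i => (hmeas i).stronglyMeasurable) hmean one_pos hbdd] with ω hv ⟨hAbove, hBelow⟩
  have hpos := frequently_lt_of_not_bddAbove_range hAbove 0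
  have hneg := frequently_lt_of_not_bddBelow_range hBelow 0
  exact ⟨not_exists_tendsto_of_frequently_eq (by norm_num)
      (hpos.mono fun _ => lq_edf_eq_one_of_sum_pos hv)
      (hneg.mono fun _ => lq_edf_eq_neg_one_of_sum_neg hv),
    not_exists_tendsto_of_frequently_eq (by norm_num)
      (hpos.mono fun _ => rq_edf_eq_one_of_sum_pos hv)
      (hneg.mono fun _ => rq_edf_eq_neg_one_of_sum_neg hv)⟩
end

section
/- Let X be a real random variable with distribution function F_X, let p ∈ (0,1), and suppose lq_{F_X}(p) < rq_{F_X}(p). Set h = rq_{F_X}(p) − lq_{F_X}(p) and define Y = X if X ≤ lq_{F_X}(p) and Y = X − h if X ≥ rq_{F_X}(p) (the event lq_{F_X}(p) < X < rq_{F_X}(p) has probability zero). Then the distribution function F_Y of Y satisfies lq_{F_Y}(p) = rq_{F_Y}(p) = lq_{F_X}(p). -/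
open MeasureTheory ProbabilityTheory Filter

/-! Since `F_X < p` below `lq` and `F_X ≤ p` below `rq`, right continuity gives `p ≤ F_X(lq)`, and
hence `X` puts no mass on `(lq, rq)`. Collapsing that gap, `F_Y = F_X` below `lq` and
`F_Y(x) = F_X(x + h)` from `lq` on, so `F_Y < p` left of `lq` and `F_Y > p` right of it: both
quantiles of `F_Y` are squeezed to `lq`. -/

open Set

theorem csInf_eq_of_Ioi_subset_of_subset_Ici {α : Type*} [ConditionallyCompleteLinearOrder α]
    [NoMaxOrder α] [DenselyOrdered α] {s : Set α} {a : α} (hIoi : Ioi a ⊆ s) (hIci : s ⊆ Ici a) :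
    sInf s = a :=
  le_antisymm ((csInf_le_csInf ⟨a, hIci⟩ nonempty_Ioi hIoi).trans_eq csInf_Ioi)
    (le_csInf (nonempty_Ioi.mono hIoi) hIci)

noncomputable def collapseGap (a h x : ℝ) : ℝ := if x ≤ a then x else x - h

lemma measurable_collapseGap (a h : ℝ) : Measurable (collapseGap a h) :=
  Measurable.ite measurableSet_Iic measurable_id (measurable_id.sub_const h)

lemma preimage_collapseGap_Iic_of_le {a h x : ℝ} (hh : 0 ≤ h) (hx : a ≤ x) :
    collapseGap a h ⁻¹' Iic x = Iic (x + h) := by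
  ext y
  simp only [mem_preimage, mem_Iic, collapseGap]
  split_ifs with hy
  · constructor <;> intro <;> linarith
  · exact sub_le_iff_le_add

lemma preimage_collapseGap_Iic_of_lt {a h x : ℝ} (hx : x < a) :
    collapseGap a h ⁻¹' Iic x = Iic x ∪ Ioc a (x + h) := by
  ext y
  simp only [mem_preimage, mem_Iic, mem_union, mem_Ioc, collapseGap]
  split_ifs with hy
  · constructor
    · exact Or.inl
    · rintro (hy' | ⟨hay, -⟩)
      · exact hy'
      · linarith
  · constructor
    · intro hy'; right; constructor <;> linarith
    · rintro (hy' | ⟨-, hy'⟩) <;> linarith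

namespace ProbabilityTheory

lemma cdf_map_apply {Ω : Type*} [MeasurableSpace Ω] {μ : Measure Ω} [IsProbabilityMeasure μ]
    {X : Ω → ℝ} (hX : Measurable X) (x : ℝ) : cdf (μ.map X) x = μ.real (X ⁻¹' Iic x) := by
  have := Measure.isProbabilityMeasure_map (μ := μ) hX.aemeasurable
  rw [cdf_eq_real, map_measureReal_apply hX measurableSet_Iic]

variable {ν : Measure ℝ} {p x : ℝ}

lemma exists_lt_cdf (hp : p < 1) : ∃ x, p < cdf ν x :=
  ((tendsto_cdf_atTop ν).eventually (eventually_gt_nhds hp)).exists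

lemma bddBelow_setOf_le_cdf (hp : 0 < p) : BddBelow {x | p ≤ cdf ν x} := by
  obtain ⟨m, hm⟩ := eventually_atBot.1 ((tendsto_cdf_atBot ν).eventually (eventually_lt_nhds hp))
  exact ⟨m, fun x hx => le_of_not_gt fun hxm => (hm x hxm.le).not_ge hx⟩

lemma le_cdf_lq (hp1 : p < 1) : p ≤ cdf ν (lq (cdf ν) p) := by
  have hne : {x | p ≤ cdf ν x}.Nonempty := (exists_lt_cdf hp1).imp fun _ => le_of_lt
  refine ge_of_tendsto (((cdf ν).right_continuous _).mono Ioi_subset_Ici_self) ?_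
  filter_upwards [self_mem_nhdsWithin] with x hx
  obtain ⟨y, hy, hyx⟩ := exists_lt_of_csInf_lt hne hx
  exact hy.trans (monotone_cdf ν hyx.le)

lemma le_cdf_iff_lq_le (hp0 : 0 < p) (hp1 : p < 1) : p ≤ cdf ν x ↔ lq (cdf ν) p ≤ x :=
  ⟨fun hx => csInf_le (bddBelow_setOf_le_cdf hp0) hx,
    fun hx => (le_cdf_lq hp1).trans (monotone_cdf ν hx)⟩

lemma lt_cdf_of_rq_lt (hp : p < 1) (hx : rq (cdf ν) p < x) : p < cdf ν x := by
  obtain ⟨y, hy, hyx⟩ := exists_lt_of_csInf_lt (exists_lt_cdf hp) hx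
  exact lt_of_lt_of_le hy (monotone_cdf ν hyx.le)

lemma cdf_le_of_lt_rq (hp : 0 < p) (hx : x < rq (cdf ν) p) : cdf ν x ≤ p :=
  le_of_not_gt fun h => hx.not_ge <|
    csInf_le ((bddBelow_setOf_le_cdf hp).mono (ofPred_subset_ofPred.2 fun _ => le_of_lt)) h

lemma lq_le_rq (hp0 : 0 < p) (hp1 : p < 1) : lq (cdf ν) p ≤ rq (cdf ν) p :=
  csInf_le_csInf (bddBelow_setOf_le_cdf hp0) (exists_lt_cdf hp1)
    (ofPred_subset_ofPred.2 fun _ => le_of_lt)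

variable [IsProbabilityMeasure ν]

lemma measure_Ioo_lq_rq (hp0 : 0 < p) (hp1 : p < 1) :
    ν (Ioo (lq (cdf ν) p) (rq (cdf ν) p)) = 0 := by
  have hleftLim : Function.leftLim (cdf ν) (rq (cdf ν) p) ≤ p :=
    le_of_tendsto ((monotone_cdf ν).tendsto_leftLim _)
      (eventually_nhdsWithin_of_forall fun _ hx => cdf_le_of_lt_rq hp0 hx)
  calc ν (Ioo (lq (cdf ν) p) (rq (cdf ν) p))
      = (cdf ν).measure (Ioo (lq (cdf ν) p) (rq (cdf ν) p)) := by rw [measure_cdf]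
    _ = 0 := by
      rw [StieltjesFunction.measure_Ioo, ENNReal.ofReal_eq_zero]
      linarith [le_cdf_lq (ν := ν) hp1]

variable {a h : ℝ}

lemma cdf_map_collapseGap_of_le (hh : 0 ≤ h) (hx : a ≤ x) :
    cdf (ν.map (collapseGap a h)) x = cdf ν (x + h) := by
  rw [cdf_map_apply (measurable_collapseGap a h), cdf_eq_real]
  exact congrArg ν.real (preimage_collapseGap_Iic_of_le hh hx)

lemma cdf_map_collapseGap_of_lt (hgap : ν (Ioo a (a + h)) = 0) (hx : x < a) :
    cdf (ν.map (collapseGap a h)) x = cdf ν x := by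
  rw [cdf_map_apply (measurable_collapseGap a h), cdf_eq_real]
  have hnull : ν (Ioc a (x + h)) = 0 :=
    measure_mono_null (Ioc_subset_Ioo_right (by linarith)) hgap
  rw [preimage_collapseGap_Iic_of_lt hx]
  exact measureReal_congr (union_ae_eq_left_of_ae_eq_empty (ae_eq_empty.mpr hnull))

theorem lq_eq_rq_cdf_map_collapseGap (hp0 : 0 < p) (hp1 : p < 1) :
    lq (cdf (ν.map (collapseGap (lq (cdf ν) p) (rq (cdf ν) p - lq (cdf ν) p)))) p
        = lq (cdf ν) p ∧
      rq (cdf (ν.map (collapseGap (lq (cdf ν) p) (rq (cdf ν) p - lq (cdf ν) p)))) p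
        = lq (cdf ν) p := by
  set a := lq (cdf ν) p
  set b := rq (cdf ν) p
  set G := cdf (ν.map (collapseGap a (b - a)))
  have hab : a ≤ b := lq_le_rq hp0 hp1
  have hgap : ν (Ioo a (a + (b - a))) = 0 := by
    rw [add_sub_cancel]
    exact measure_Ioo_lq_rq hp0 hp1
  have hIoi : Ioi a ⊆ {x | p < G x} := fun x hx => by
    rw [mem_ofPred, cdf_map_collapseGap_of_le (sub_nonneg.2 hab) (le_of_lt hx)]
    exact lt_cdf_of_rq_lt hp1 (by linarith [mem_Ioi.1 hx])
  have hIci : {x | p ≤ G x} ⊆ Ici a := fun x hx => le_of_not_gt fun hxa => by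
    rw [mem_ofPred, cdf_map_collapseGap_of_lt hgap hxa, le_cdf_iff_lq_le hp0 hp1] at hx
    exact hxa.not_ge hx
  have hlt_le : {x | p < G x} ⊆ {x | p ≤ G x} := ofPred_subset_ofPred.2 fun _ => le_of_lt
  exact ⟨csInf_eq_of_Ioi_subset_of_subset_Ici (hIoi.trans hlt_le) hIci,
    csInf_eq_of_Ioi_subset_of_subset_Ici hIoi (hlt_le.trans hIci)⟩

end ProbabilityTheory

theorem shifted_rv_quantiles_coincide_general
    {Ω : Type*} [MeasurableSpace Ω] (μ : Measure Ω) [IsProbabilityMeasure μ]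
    (X : Ω → ℝ) (hX : Measurable X)
    (F : ℝ → ℝ) (hF : ∀ x, F x = (μ {ω | X ω ≤ x}).toReal)
    (p : ℝ) (hp : p ∈ Set.Ioo (0 : ℝ) 1)
    (h : ℝ) (hh : h = rq F p - lq F p)
    (Y : Ω → ℝ) (hY : ∀ ω, Y ω = if X ω ≤ lq F p then X ω else X ω - h)
    (FY : ℝ → ℝ) (hFY : ∀ x, FY x = (μ {ω | Y ω ≤ x}).toReal) :
    lq FY p = lq F p ∧ rq FY p = lq F p := by
  set ν := μ.map X
  have : IsProbabilityMeasure ν := Measure.isProbabilityMeasure_map hX.aemeasurable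
  have hYX : Y = collapseGap (lq F p) h ∘ X := funext hY
  have hFν : F = cdf ν := funext fun x => by rw [hF, cdf_map_apply hX]; rfl
  have hFYν : FY = cdf (ν.map (collapseGap (lq F p) h)) := funext fun x => by
    rw [hFY, Measure.map_map (measurable_collapseGap _ _) hX,
      cdf_map_apply ((measurable_collapseGap _ _).comp hX), ← hYX]
    rfl
  subst hFYν hFν hh
  exact lq_eq_rq_cdf_map_collapseGap hp.1 hp.2

/-- Shifting the values of `X` above `rq F p` back by `h = rq F p - lq F p`
produces a random variable `Y` whose left and right quantiles at `p` both
equal `lq F p`. -/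
theorem shifted_rv_quantiles_coincide
    {Ω : Type*} [MeasurableSpace Ω] (μ : Measure Ω) [IsProbabilityMeasure μ]
    (X : Ω → ℝ) (hX : Measurable X)
    (F : ℝ → ℝ) (hF : ∀ x, F x = (μ {ω | X ω ≤ x}).toReal)
    (p : ℝ) (hp : p ∈ Set.Ioo (0 : ℝ) 1) (hlt : lq F p < rq F p)
    (h : ℝ) (hh : h = rq F p - lq F p)
    (Y : Ω → ℝ) (hY : ∀ ω, Y ω = if X ω ≤ lq F p then X ω else X ω - h)
    (FY : ℝ → ℝ) (hFY : ∀ x, FY x = (μ {ω | Y ω ≤ x}).toReal) :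
    lq FY p = lq F p ∧ rq FY p = lq F p :=
  shifted_rv_quantiles_coincide_general μ X hX F hF p hp h hh Y hY FY hFY
end

section
/- Let X_1, X_2, ... be i.i.d. real random variables with distribution function F_X, let p ∈ (0,1) with lq_{F_X}(p) < rq_{F_X}(p), and define Y_i = 1 if X_i ≥ rq_{F_X}(p) and Y_i = 0 if X_i ≤ lq_{F_X}(p). Then Y_1, Y_2, ... are i.i.d. with P(Y_i = 0) = p and P(Y_i = 1) = 1 − p, and if the left sample quantile sequence lq_{F_{n,Y}}(p) of the Y-sample diverges almost surely, then the left sample quantile sequence lq_{F_{n,X}}(p) of the X-sample diverges almost surely. -/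
open MeasureTheory ProbabilityTheory Filter

/-!
The distribution function `F_X` equals `p` on `[lq F_X p, rq F_X p)`, so `P(X_i ≤ lq) = p` and
almost surely no `X_i` falls into the gap `(lq, rq)`. Off the gap, the empirical left
`p`-quantile of the `X`-sample is `≤ lq` when at least a fraction `p` of the sample lies below
`lq`, and `≥ rq` otherwise; in the first case the `Y`-sample quantile is `0`, in the second `1`.
A limit of the `X`-quantiles lies strictly on one side of `lq` or of `rq`, so one case holds
eventually and the `Y`-quantiles are eventually constant.
-/

open Set

section Quantile

variable {F : ℝ → ℝ} {p x : ℝ}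

lemma lq_le (hF : BddBelow {y | p ≤ F y}) (hx : p ≤ F x) : lq F p ≤ x :=
  csInf_le hF hx

lemma le_lq (hF : ∃ y, p ≤ F y) (hx : ∀ y < x, F y < p) : x ≤ lq F p :=
  le_csInf hF fun _ hy => not_lt.1 fun h => (hx _ h).not_ge hy

lemma bddBelow_setOf_le_apply (hF : Monotone F) (hlow : ∃ y, F y < p) :
    BddBelow {y | p ≤ F y} := by
  obtain ⟨y₀, hy₀⟩ := hlow
  exact ⟨y₀, fun y hy => not_lt.1 fun h => (hF h.le).not_gt (hy₀.trans_le hy)⟩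

lemma apply_le_of_lt_rq (hF : Monotone F) (hlow : ∃ y, F y < p) (hx : x < rq F p) : F x ≤ p :=
  not_lt.1 fun h => hx.not_ge <| csInf_le
    ((bddBelow_setOf_le_apply hF hlow).mono fun _ (hy : p < F _) => hy.le) h

end Quantile

namespace StieltjesFunction

variable (F : StieltjesFunction ℝ) {p : ℝ}

lemma le_apply_lq (hlow : ∃ y, F y < p) (hhigh : ∃ y, p ≤ F y) : p ≤ F (lq F p) := by
  have hbdd := bddBelow_setOf_le_apply F.mono hlow
  by_contra! h
  -- right continuity keeps `F < p` on some `[lq F p, u)`, yet that interval meets `{p ≤ F}`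
  obtain ⟨u, hu, hFu⟩ := mem_nhdsGE_iff_exists_Ico_subset.1
    ((F.right_continuous _).eventually (eventually_lt_nhds h))
  obtain ⟨y, hy, hyu⟩ := (csInf_lt_iff hbdd hhigh).1 hu
  exact (hFu ⟨csInf_le hbdd hy, hyu⟩).not_ge (show p ≤ F y from hy)

lemma eqOn_Ico_lq_rq (hlow : ∃ y, F y < p) (hhigh : ∃ y, p ≤ F y) :
    EqOn F (fun _ => p) (Ico (lq F p) (rq F p)) := fun _ hx =>
  le_antisymm (apply_le_of_lt_rq F.mono hlow hx.2)
    ((F.le_apply_lq hlow hhigh).trans (F.mono hx.1))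

lemma measure_Ioo_lq_rq (hlow : ∃ y, F y < p) (hhigh : ∃ y, p ≤ F y) :
    F.measure (Ioo (lq F p) (rq F p)) = 0 := by
  rcases le_or_gt (rq F p) (lq F p) with h | h
  · rw [Ioo_eq_empty h.not_gt, measure_empty]
  have hleft : Function.leftLim F (rq F p) = p := by
    refine leftLim_eq_of_tendsto (tendsto_const_nhds.congr' ?_)
    filter_upwards [Ico_mem_nhdsLT h] with x hx
    exact (F.eqOn_Ico_lq_rq hlow hhigh hx).symm
  rw [measure_Ioo, hleft, F.eqOn_Ico_lq_rq hlow hhigh ⟨le_rfl, h⟩, sub_self,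
    ENNReal.ofReal_zero]

end StieltjesFunction

section EmpiricalQuantile

variable {Ω Ω' : Type*} {X : ℕ → Ω → ℝ} {n : ℕ} {ω : Ω} {p x : ℝ}

lemma edf_le_edf {X' : ℕ → Ω' → ℝ} {ω' : Ω'} {x' : ℝ}
    (h : ∀ i, X i ω ≤ x → X' i ω' ≤ x') :
    edf X n ω x ≤ edf X' n ω' x' :=
  div_le_div_of_nonneg_right (Nat.cast_le.2 <| Finset.card_le_card <|
    Finset.monotone_filter_right _ fun i _ => h i) n.cast_nonneg

lemma edf_eq_zero (h : ∀ i < n, x < X i ω) : edf X n ω x = 0 := by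
  simp [edf, Finset.filter_false_of_mem fun i hi => (h i (Finset.mem_range.1 hi)).not_ge]

lemma edf_eq_one (hn : n ≠ 0) (h : ∀ i < n, X i ω ≤ x) : edf X n ω x = 1 := by
  simp [edf, Finset.filter_true_of_mem fun i hi => h i (Finset.mem_range.1 hi), hn]

lemma bddBelow_setOf_le_edf (hp : 0 < p) : BddBelow {y | p ≤ edf X n ω y} := by
  obtain ⟨m, hm⟩ := ((Finset.range n).image (X · ω)).bddBelow
  refine ⟨m, fun y (hy : p ≤ edf X n ω y) => not_lt.1 fun hym => hp.not_ge ?_⟩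
  rwa [edf_eq_zero fun i hi =>
    hym.trans_le <| hm <| Finset.mem_image_of_mem _ (Finset.mem_range.2 hi)] at hy

lemma exists_le_edf (hn : n ≠ 0) (hp : p ≤ 1) : ∃ y, p ≤ edf X n ω y := by
  obtain ⟨M, hM⟩ := ((Finset.range n).image (X · ω)).bddAbove
  refine ⟨M, ?_⟩
  rwa [edf_eq_one hn fun i hi => hM <| Finset.mem_image_of_mem _ (Finset.mem_range.2 hi)]

lemma lq_edf_le (hp : 0 < p) (hx : p ≤ edf X n ω x) : lq (edf X n ω) p ≤ x :=
  lq_le (bddBelow_setOf_le_edf hp) hx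

lemma le_lq_edf (hn : n ≠ 0) (hp : p ≤ 1) (hx : ∀ y < x, edf X n ω y < p) :
    x ≤ lq (edf X n ω) p :=
  le_lq (exists_le_edf hn hp) hx

end EmpiricalQuantile

lemma Filter.Tendsto.exists_tendsto_of_eventually_le_or_ge {α β γ : Type*} [LinearOrder β]
    [TopologicalSpace β] [OrderTopology β] [TopologicalSpace γ] {f : Filter α} {u : α → β}
    {v : α → γ} {l r L : β} {a b : γ} (hlr : l < r) (hu : Tendsto u f (nhds L))
    (huv : ∀ᶠ n in f, (u n ≤ l ∧ v n = a) ∨ (r ≤ u n ∧ v n = b)) :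
    ∃ c, Tendsto v f (nhds c) := by
  rcases lt_or_ge L r with hL | hL
  · refine ⟨a, tendsto_const_nhds.congr' ?_⟩
    filter_upwards [huv, hu.eventually (gt_mem_nhds hL)] with n h hn
    exact (h.resolve_right fun h' => h'.1.not_gt hn).2.symm
  · refine ⟨b, tendsto_const_nhds.congr' ?_⟩
    filter_upwards [huv, hu.eventually (lt_mem_nhds (hlr.trans_le hL))] with n h hn
    exact (h.resolve_left fun h' => h'.1.not_gt hn).2.symm

section Indicator

variable {Ω : Type*} {X Y : ℕ → Ω → ℝ} {n : ℕ} {ω : Ω} {p l r : ℝ}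

lemma lq_edf_indicator (hp : p ∈ Ioc 0 1) (hn : n ≠ 0)
    (hY : ∀ i, Y i ω = if X i ω ≤ l then 0 else 1) :
    lq (edf Y n ω) p = if p ≤ edf X n ω l then 0 else 1 := by
  have hY01 : ∀ i, 0 ≤ Y i ω ∧ Y i ω ≤ 1 := fun i => by rw [hY]; split_ifs <;> norm_num
  have hYl : ∀ y < 1, ∀ i, Y i ω ≤ y → X i ω ≤ l := fun y hy i => by
    rw [hY]; split_ifs with h
    · exact fun _ => h
    · intro h'
      linarith
  split_ifs with h
  · refine le_antisymm (lq_edf_le hp.1 <| h.trans <| edf_le_edf fun i hi => ?_)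
      (le_lq_edf hn hp.2 fun y hy => ?_)
    · simp [hY, hi]
    · rw [edf_eq_zero fun i _ => hy.trans_le (hY01 i).1]
      exact hp.1
  · refine le_antisymm (lq_edf_le hp.1 ?_) (le_lq_edf hn hp.2 fun y hy => ?_)
    · rw [edf_eq_one hn fun i _ => (hY01 i).2]
      exact hp.2
    · exact (edf_le_edf (hYl y hy)).trans_lt (not_le.1 h)

lemma lq_edf_le_and_eq_zero_or_ge_and_eq_one (hp : p ∈ Ioc 0 1) (hn : n ≠ 0)
    (hY : ∀ i, Y i ω = if X i ω ≤ l then 0 else 1) (hgap : ∀ i, X i ω ∉ Ioo l r) :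
    (lq (edf X n ω) p ≤ l ∧ lq (edf Y n ω) p = 0) ∨
      (r ≤ lq (edf X n ω) p ∧ lq (edf Y n ω) p = 1) := by
  rw [lq_edf_indicator hp hn hY]
  by_cases h : p ≤ edf X n ω l
  · exact .inl ⟨lq_edf_le hp.1 h, if_pos h⟩
  · refine .inr ⟨le_lq_edf hn hp.2 fun y hy => ?_, if_neg h⟩
    refine (edf_le_edf fun i hi => ?_).trans_lt (not_le.1 h)
    exact not_lt.1 fun hil => hgap i ⟨hil, hi.trans_lt hy⟩

lemma not_exists_tendsto_lq_edf_of_indicator (hp : p ∈ Ioc 0 1) (hlr : l < r)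
    (hY : ∀ i, Y i ω = if X i ω ≤ l then 0 else 1) (hgap : ∀ i, X i ω ∉ Ioo l r)
    (hdiv : ¬ ∃ L, Tendsto (fun n => lq (edf Y n ω) p) atTop (nhds L)) :
    ¬ ∃ L, Tendsto (fun n => lq (edf X n ω) p) atTop (nhds L) := fun ⟨_, hL⟩ =>
  hdiv <| hL.exists_tendsto_of_eventually_le_or_ge hlr <| (eventually_ne_atTop 0).mono
    fun _ hn => lq_edf_le_and_eq_zero_or_ge_and_eq_one hp hn hY hgap

end Indicator

namespace ProbabilityTheory

variable (ν : Measure ℝ) {p : ℝ}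

lemma exists_cdf_lt (hp : 0 < p) : ∃ y, cdf ν y < p :=
  ((tendsto_cdf_atBot ν).eventually (eventually_lt_nhds hp)).exists

lemma exists_le_cdf (hp : p < 1) : ∃ y, p ≤ cdf ν y :=
  ((tendsto_cdf_atTop ν).eventually (eventually_gt_nhds hp)).exists.imp fun _ => le_of_lt

variable [IsProbabilityMeasure ν]

lemma measure_Iic_lq_cdf (hp : p ∈ Ioo 0 1) (hlt : lq (cdf ν) p < rq (cdf ν) p) :
    ν (Iic (lq (cdf ν) p)) = ENNReal.ofReal p := by
  rw [← ofReal_cdf, (cdf ν).eqOn_Ico_lq_rq (exists_cdf_lt ν hp.1) (exists_le_cdf ν hp.2)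
    ⟨le_rfl, hlt⟩]

lemma measure_Ioo_lq_rq_cdf (hp : p ∈ Ioo 0 1) :
    ν (Ioo (lq (cdf ν) p) (rq (cdf ν) p)) = 0 := by
  simpa only [measure_cdf] using
    (cdf ν).measure_Ioo_lq_rq (exists_cdf_lt ν hp.1) (exists_le_cdf ν hp.2)

end ProbabilityTheory

/-- The indicator variables `Y i = 1` if `X i ≥ rq F_X p`, `Y i = 0` if
`X i ≤ lq F_X p` form an i.i.d. sequence with `P(Y i = 0) = p` and
`P(Y i = 1) = 1 - p`; moreover, almost sure divergence of the left sample
quantiles of the `Y` sample implies almost sure divergence of the left sample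
quantiles of the `X` sample. -/
theorem indicator_reduction_for_divergence
    {Ω : Type*} [MeasurableSpace Ω] (μ : Measure Ω) [IsProbabilityMeasure μ]
    (X : ℕ → Ω → ℝ) (hmeas : ∀ i, Measurable (X i))
    (hindep : iIndepFun X μ)
    (hident : ∀ i, IdentDistrib (X i) (X 0) μ μ)
    (FX : ℝ → ℝ) (hFX : ∀ x, FX x = (μ {ω | X 0 ω ≤ x}).toReal)
    (p : ℝ) (hp : p ∈ Set.Ioo (0 : ℝ) 1) (hlt : lq FX p < rq FX p)
    (Y : ℕ → Ω → ℝ)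
    (hY : ∀ i ω, Y i ω = if X i ω ≤ lq FX p then 0 else 1) :
    iIndepFun Y μ ∧
    (∀ i, IdentDistrib (Y i) (Y 0) μ μ) ∧
    (∀ i, μ {ω | Y i ω = 0} = ENNReal.ofReal p) ∧
    (∀ i, μ {ω | Y i ω = 1} = ENNReal.ofReal (1 - p)) ∧
    ((∀ᵐ ω ∂μ, ¬ ∃ L : ℝ, Tendsto (fun n => lq (edf Y n ω) p) atTop (nhds L)) →
      (∀ᵐ ω ∂μ, ¬ ∃ L : ℝ,
        Tendsto (fun n => lq (edf X n ω) p) atTop (nhds L))) := by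
  set ν := μ.map (X 0)
  have : IsProbabilityMeasure ν := Measure.isProbabilityMeasure_map (hmeas 0).aemeasurable
  obtain rfl : FX = cdf ν := funext fun x => by
    rw [hFX, cdf_eq_real, measureReal_def, Measure.map_apply (hmeas 0) measurableSet_Iic]
    rfl
  set l := lq (cdf ν) p
  have hle (i : ℕ) : μ {ω | X i ω ≤ l} = ENNReal.ofReal p := by
    rw [← measure_Iic_lq_cdf ν hp hlt, Measure.map_apply (hmeas 0) measurableSet_Iic,
      ← (hident i).measure_mem_eq measurableSet_Iic]
    rfl
  have hgap : ∀ᵐ ω ∂μ, ∀ i, X i ω ∉ Ioo l (rq (cdf ν) p) := ae_all_iff.2 fun i => by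
    refine (measure_eq_zero_iff_ae_notMem (s := X i ⁻¹' Ioo l _)).1 ?_
    rw [(hident i).measure_mem_eq measurableSet_Ioo,
      ← Measure.map_apply (hmeas 0) measurableSet_Ioo]
    exact measure_Ioo_lq_rq_cdf ν hp
  have hg : Measurable fun x : ℝ => if x ≤ l then (0 : ℝ) else 1 :=
    Measurable.ite measurableSet_Iic measurable_const measurable_const
  have hYX : Y = fun i => (fun x => if x ≤ l then 0 else 1) ∘ X i :=
    funext fun i => funext (hY i)
  have hY0 (i : ℕ) : {ω | Y i ω = 0} = {ω | X i ω ≤ l} := by ext; simp [hY]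
  have hY1 (i : ℕ) : {ω | Y i ω = 1} = {ω | X i ω ≤ l}ᶜ := by ext; simp [hY]
  refine ⟨hYX ▸ hindep.comp _ fun _ => hg, fun i => hYX ▸ (hident i).comp hg,
    fun i => by rw [hY0, hle], fun i => ?_, fun hdiv => ?_⟩
  · rw [hY1, prob_compl_eq_one_sub (measurableSet_le (hmeas i) measurable_const), hle,
      ENNReal.ofReal_sub 1 hp.1.le, ENNReal.ofReal_one]
  · filter_upwards [hgap, hdiv] with ω hgapω hdivω
    exact not_exists_tendsto_lq_edf_of_indicator ⟨hp.1, hp.2.le⟩ hlt (hY · ω) hgapω hdivω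
end
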